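/- Let δ = (1,1,3) ∈ ℝ^3 in coordinates (x_12, x_13, x_23). Then d(δ, U_3) = 1; the points (2,2,2), (2,1,2), and (1,2,2) all belong to C(δ, U_3); and every u ∈ C(δ, U_3) satisfies exactly one of: u_12 = u_13 = u_23, or u_13 < u_12 = u_23, or u_12 < u_13 = u_23. In particular no l∞-closest ultrametric to δ satisfies u_23 < u_12 = u_13. -/

import Mathlib

/-- Index set for unordered pairs of distinct elements of `{1,…,n}`: ordered pairs
`(i, j)` with `i < j`. -/
abbrev PairIdx (n : ℕ) := {p : Fin n × Fin n // p.1 < p.2}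

/-- A dissimilarity map on `n` elements: a point of `ℝ^(n choose 2)`, viewed as a
real-valued function on unordered pairs of distinct elements.  The product metric on this
type is exactly the `l∞`-metric. -/
abbrev DissimMap (n : ℕ) := PairIdx n → ℝ

/-- The value of a dissimilarity map on the unordered pair `{i, j}` (zero if `i = j`). -/
def dm {n : ℕ} (u : DissimMap n) (i j : Fin n) : ℝ :=
  if h : i < j then u ⟨(i, j), h⟩ else if h' : j < i then u ⟨(j, i), h'⟩ else 0

/-- The set of ultrametrics on `n` elements. -/
def Ultrametrics (n : ℕ) : Set (DissimMap n) :=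
  {u | ∀ i j k : Fin n, i ≠ j → i ≠ k → j ≠ k → dm u i j ≤ max (dm u i k) (dm u j k)}

/-- The set of points of `S` that are `l∞`-closest to `x`. -/
noncomputable def closestPts {n : ℕ} (x : DissimMap n) (S : Set (DissimMap n)) :
    Set (DissimMap n) :=
  {y ∈ S | dist x y = Metric.infDist x S}

/-- Build a dissimilarity map from a matrix of values. -/
def ofMat {n : ℕ} (A : Matrix (Fin n) (Fin n) ℝ) : DissimMap n := fun p => A p.1.1 p.1.2

/-! The ultrametric inequality at the long side gives `u₂₃ ≤ max u₁₂ u₁₃`. A point at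
distance `r` from `δ = (1,1,3)` has `u₂₃ ≥ 3 - r` and `u₁₂, u₁₃ ≤ 1 + r`, so `r ≥ 1`; the three
listed ultrametrics attain `r = 1`. At `r = 1` all these inequalities are tight:
`u₂₃ = 2 = max u₁₂ u₁₃`, so the maximum of `u` is attained at `u₂₃` and at least one of
`u₁₂, u₁₃`, which is exactly the stated trichotomy. -/

open Metric

section DissimMap

variable {n : ℕ}

lemma dm_ofMat_of_lt (A : Matrix (Fin n) (Fin n) ℝ) {i j : Fin n} (h : i < j) :
    dm (ofMat A) i j = A i j := by
  simp [dm, ofMat, h]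

lemma dm_comm (u : DissimMap n) (i j : Fin n) : dm u i j = dm u j i := by
  unfold dm
  rcases lt_trichotomy i j with h | rfl | h
  · simp [h, h.not_gt]
  · rfl
  · simp [h, h.not_gt]

lemma abs_dm_sub_dm_le_dist (x y : DissimMap n) (i j : Fin n) :
    |dm x i j - dm y i j| ≤ dist x y := by
  unfold dm
  split_ifs
  · exact dist_le_pi_dist x y _
  · exact dist_le_pi_dist x y _
  · simp

lemma dist_le_of_forall_abs_dm_sub_dm_le {x y : DissimMap n} {r : ℝ} (hr : 0 ≤ r)
    (h : ∀ i j : Fin n, i < j → |dm x i j - dm y i j| ≤ r) : dist x y ≤ r := by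
  refine (dist_pi_le_iff hr).2 fun ⟨(i, j), hij⟩ => ?_
  simpa [dm, hij, Real.dist_eq] using h i j hij

lemma mem_closestPts_of_dist_le_infDist {x y : DissimMap n}
    {s : Set (DissimMap n)} (hy : y ∈ s) (h : dist x y ≤ infDist x s) : y ∈ closestPts x s :=
  ⟨hy, le_antisymm h (infDist_le_dist_of_mem hy)⟩

end DissimMap

section OfMatThree

variable (a b c : ℝ)

@[simp] lemma dm_ofMat_zero_one : dm (ofMat !![0, a, b; a, 0, c; b, c, 0]) 0 1 = a :=
  dm_ofMat_of_lt _ (by decide)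

@[simp] lemma dm_ofMat_zero_two : dm (ofMat !![0, a, b; a, 0, c; b, c, 0]) 0 2 = b :=
  dm_ofMat_of_lt _ (by decide)

@[simp] lemma dm_ofMat_one_two : dm (ofMat !![0, a, b; a, 0, c; b, c, 0]) 1 2 = c :=
  dm_ofMat_of_lt _ (by decide)

end OfMatThree

lemma mem_ultrametrics_three_iff (u : DissimMap 3) :
    u ∈ Ultrametrics 3 ↔
      dm u 0 1 ≤ max (dm u 0 2) (dm u 1 2) ∧ dm u 0 2 ≤ max (dm u 0 1) (dm u 1 2) ∧
        dm u 1 2 ≤ max (dm u 0 1) (dm u 0 2) := by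
  refine ⟨fun hu => ⟨?_, ?_, ?_⟩, fun ⟨h01, h02, h12⟩ i j k hij hik hjk => ?_⟩
  · simpa [dm_comm u 2 1] using hu 0 1 2 (by decide) (by decide) (by decide)
  · simpa [dm_comm u 1 2] using hu 0 2 1 (by decide) (by decide) (by decide)
  · simpa [dm_comm u 1 0, dm_comm u 2 0] using hu 1 2 0 (by decide) (by decide) (by decide)
  · fin_cases i <;> fin_cases j <;> fin_cases k <;>
      simp only [Fin.reduceFinMk, Fin.isValue, dm_comm u 1 0, dm_comm u 2 0, dm_comm u 2 1, ne_eq,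
        not_true_eq_false] at hij hik hjk ⊢ <;>
      first | assumption | (rw [max_comm]; assumption)

lemma sub_max_le_two_mul_dist {x u : DissimMap 3} (hu : u ∈ Ultrametrics 3) :
    dm x 1 2 - max (dm x 0 1) (dm x 0 2) ≤ 2 * dist x u := by
  have h12 := abs_le.1 (abs_dm_sub_dm_le_dist x u 1 2)
  have h01 := abs_le.1 (abs_dm_sub_dm_le_dist x u 0 1)
  have h02 := abs_le.1 (abs_dm_sub_dm_le_dist x u 0 2)
  have hu12 := ((mem_ultrametrics_three_iff u).1 hu).2.2
  have : max (dm u 0 1) (dm u 0 2) ≤ max (dm x 0 1) (dm x 0 2) + dist x u := by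
    rw [← max_add_add_right]
    exact max_le_max (by linarith) (by linarith)
  linarith

lemma max_eq_of_mem_ultrametrics_three {u : DissimMap 3} (hu : u ∈ Ultrametrics 3)
    (h01 : dm u 0 1 ≤ dm u 1 2) (h02 : dm u 0 2 ≤ dm u 1 2) :
    max (dm u 0 1) (dm u 0 2) = dm u 1 2 :=
  le_antisymm (max_le h01 h02) ((mem_ultrametrics_three_iff u).1 hu).2.2

lemma eq_or_lt_of_max_eq {α : Type*} [LinearOrder α] {a b c : α} (h : max a b = c) :
    (a = b ∧ b = c) ∨ (b < a ∧ a = c) ∨ (a < b ∧ b = c) := by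
  rcases lt_trichotomy a b with hab | rfl | hab
  · exact Or.inr (Or.inr ⟨hab, by rwa [max_eq_right hab.le] at h⟩)
  · exact Or.inl ⟨rfl, by rwa [max_self] at h⟩
  · exact Or.inr (Or.inl ⟨hab, by rwa [max_eq_left hab.le] at h⟩)

section Delta

local notation "δ" => ofMat !![(0 : ℝ), 1, 1; 1, 0, 3; 1, 3, 0]

lemma one_le_dist_delta {u : DissimMap 3} (hu : u ∈ Ultrametrics 3) : 1 ≤ dist δ u := by
  have := sub_max_le_two_mul_dist (x := δ) hu
  rw [dm_ofMat_zero_one, dm_ofMat_zero_two, dm_ofMat_one_two, max_self] at this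
  linarith

lemma dist_delta_le_one {a b c : ℝ} (ha : |1 - a| ≤ 1) (hb : |1 - b| ≤ 1) (hc : |3 - c| ≤ 1) :
    dist δ (ofMat !![0, a, b; a, 0, c; b, c, 0]) ≤ 1 := by
  refine dist_le_of_forall_abs_dm_sub_dm_le zero_le_one fun i j hij => ?_
  fin_cases i <;> fin_cases j <;> simp_all [dm, ofMat]

lemma infDist_delta : infDist δ (Ultrametrics 3) = 1 := by
  have hw : ofMat !![(0 : ℝ), 2, 2; 2, 0, 2; 2, 2, 0] ∈ Ultrametrics 3 :=
    (mem_ultrametrics_three_iff _).2 (by norm_num)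
  refine le_antisymm ?_ ((le_infDist ⟨_, hw⟩).2 fun u hu => one_le_dist_delta hu)
  exact (infDist_le_dist_of_mem hw).trans
    (dist_delta_le_one (by norm_num) (by norm_num) (by norm_num))

lemma ofMat_mem_closestPts_delta {a b c : ℝ}
    (hu : ofMat !![0, a, b; a, 0, c; b, c, 0] ∈ Ultrametrics 3)
    (ha : |1 - a| ≤ 1) (hb : |1 - b| ≤ 1) (hc : |3 - c| ≤ 1) :
    ofMat !![0, a, b; a, 0, c; b, c, 0] ∈ closestPts δ (Ultrametrics 3) :=
  mem_closestPts_of_dist_le_infDist hu ((dist_delta_le_one ha hb hc).trans infDist_delta.ge)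

lemma dm_le_two_of_mem_closestPts_delta {u : DissimMap 3}
    (hu : u ∈ closestPts δ (Ultrametrics 3)) :
    dm u 0 1 ≤ 2 ∧ dm u 0 2 ≤ 2 ∧ 2 ≤ dm u 1 2 := by
  obtain ⟨-, hdist⟩ := hu
  rw [infDist_delta] at hdist
  have h01 := abs_le.1 (hdist ▸ abs_dm_sub_dm_le_dist δ u 0 1)
  have h02 := abs_le.1 (hdist ▸ abs_dm_sub_dm_le_dist δ u 0 2)
  have h12 := abs_le.1 (hdist ▸ abs_dm_sub_dm_le_dist δ u 1 2)
  simp only [dm_ofMat_zero_one, dm_ofMat_zero_two, dm_ofMat_one_two] at h01 h02 h12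
  exact ⟨by linarith, by linarith, by linarith⟩

end Delta

/-- for `δ = (1,1,3)` (coordinates `(x₁₂,x₁₃,x₂₃)`), `d(δ, U₃) = 1`; the
ultrametrics `(2,2,2)`, `(2,1,2)` and `(1,2,2)` are `l∞`-closest to `δ`; and every
`l∞`-closest ultrametric `u` satisfies exactly one of `u₁₂ = u₁₃ = u₂₃`,
`u₁₃ < u₁₂ = u₂₃`, or `u₁₂ < u₁₃ = u₂₃` — in particular never `u₂₃ < u₁₂ = u₁₃`. -/
theorem three_leaf_districts :
    Metric.infDist (ofMat !![0,1,1; 1,0,3; 1,3,0]) (Ultrametrics 3) = 1 ∧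
    ofMat !![0,2,2; 2,0,2; 2,2,0] ∈
      closestPts (ofMat !![0,1,1; 1,0,3; 1,3,0]) (Ultrametrics 3) ∧
    ofMat !![0,2,1; 2,0,2; 1,2,0] ∈
      closestPts (ofMat !![0,1,1; 1,0,3; 1,3,0]) (Ultrametrics 3) ∧
    ofMat !![0,1,2; 1,0,2; 2,2,0] ∈
      closestPts (ofMat !![0,1,1; 1,0,3; 1,3,0]) (Ultrametrics 3) ∧
    ∀ u ∈ closestPts (ofMat !![0,1,1; 1,0,3; 1,3,0]) (Ultrametrics 3),
      ((dm u 0 1 = dm u 0 2 ∧ dm u 0 2 = dm u 1 2) ∨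
        (dm u 0 2 < dm u 0 1 ∧ dm u 0 1 = dm u 1 2) ∨
        (dm u 0 1 < dm u 0 2 ∧ dm u 0 2 = dm u 1 2)) ∧
      ¬ (dm u 1 2 < dm u 0 1 ∧ dm u 0 1 = dm u 0 2) := by
  refine ⟨infDist_delta,
    ofMat_mem_closestPts_delta ((mem_ultrametrics_three_iff _).2 (by norm_num))
      (by norm_num) (by norm_num) (by norm_num),
    ofMat_mem_closestPts_delta ((mem_ultrametrics_three_iff _).2 (by norm_num))
      (by norm_num) (by norm_num) (by norm_num),
    ofMat_mem_closestPts_delta ((mem_ultrametrics_three_iff _).2 (by norm_num))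
      (by norm_num) (by norm_num) (by norm_num),
    fun u hu => ?_⟩
  obtain ⟨h01, h02, h12⟩ := dm_le_two_of_mem_closestPts_delta hu
  have hmax : max (dm u 0 1) (dm u 0 2) = dm u 1 2 :=
    max_eq_of_mem_ultrametrics_three hu.1 (by linarith) (by linarith)
  exact ⟨eq_or_lt_of_max_eq hmax, fun h => by linarith [h.1]⟩
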